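/- Let V be a nonempty finite vocabulary, (K, μ) a probability space of watermark keys, and F a reweighting map sending a probability distribution P on V and a key k ∈ K to a probability distribution F(P,k) on V. Assume F is unbiased, i.e. for every probability distribution P on V and every v ∈ V, ∫_K F(P,k)(v) dμ(k) = P(v). Define the n-fold ensemble ENS_n recursively by ENS_1(P, k_1) = F(P, k_1) and ENS_n(P, k_{1:n}) = F(ENS_{n-1}(P, k_{1:n-1}), k_n). Then for every n ≥ 1, every probability distribution P on V, and every v ∈ V, the expectation of ENS_n(P, k_{1:n})(v) over k_{1:n} drawn i.i.d. from μ (i.e. with respect to the n-fold product measure μ^⊗n on K^n) equals P(v). -/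

import Mathlib

open MeasureTheory

/-- A probability distribution on a finite type `V`: nonnegative and sums to one. -/
def IsProbDist {V : Type*} [Fintype V] (P : V → ℝ) : Prop :=
  (∀ v, 0 ≤ P v) ∧ ∑ v, P v = 1

/-- The `n`-fold ensemble of a reweighting map `F`:
`ENS F 1 P k = F P k₁` and `ENS F n P k = F (ENS F (n-1) P k_{1:n-1}) kₙ`. -/
def ENS {V K : Type*} (F : (V → ℝ) → K → (V → ℝ)) :
    (n : ℕ) → (V → ℝ) → (Fin n → K) → (V → ℝ)
  | 0, P, _ => P
  | n + 1, P, k => F (ENS F n P (fun i : Fin n => k i.castSucc)) (k (Fin.last n))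

/-! The ensemble applies `F` once per key, so its expectation over the last key `kₙ` is, by
unbiasedness of `F`, the ensemble of one fewer key; Fubini peels off the keys one by one.
Fubini applies because every intermediate ensemble is again a probability distribution, hence
bounded by `1`. -/

theorem IsProbDist.norm_le_one {V : Type*} [Fintype V] {P : V → ℝ} (hP : IsProbDist P) (v : V) :
    ‖P v‖ ≤ 1 := by
  rw [Real.norm_of_nonneg (hP.1 v), ← hP.2]
  exact Finset.single_le_sum (fun w _ => hP.1 w) (Finset.mem_univ v)

theorem integral_pi_fin_succ_eq_integral_integral_last {K E : Type*} [MeasurableSpace K]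
    [NormedAddCommGroup E] [NormedSpace ℝ E] (μ : Measure K) [SigmaFinite μ] {n : ℕ}
    {f : (Fin n → K) → K → E}
    (hf : Integrable (Function.uncurry f) ((Measure.pi fun _ : Fin n => μ).prod μ)) :
    ∫ k, f (Fin.init k) (k (Fin.last n)) ∂(Measure.pi fun _ : Fin (n + 1) => μ) =
      ∫ y, ∫ x, f y x ∂μ ∂(Measure.pi fun _ : Fin n => μ) := by
  have hsplit := measurePreserving_piFinSuccAbove (fun _ : Fin (n + 1) => μ) (Fin.last n)
  have hinit : ∀ k : Fin (n + 1) → K, (Fin.last n).removeNth k = Fin.init k := fun k => by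
    funext j
    simp [Fin.removeNth, Fin.init, Fin.succAbove_last]
  calc ∫ k, f (Fin.init k) (k (Fin.last n)) ∂(Measure.pi fun _ : Fin (n + 1) => μ)
      = ∫ k, (fun p : K × (Fin n → K) => f p.2 p.1)
          (MeasurableEquiv.piFinSuccAbove (fun _ => K) (Fin.last n) k)
          ∂(Measure.pi fun _ : Fin (n + 1) => μ) := by
        simp [MeasurableEquiv.piFinSuccAbove, Fin.insertNthEquiv, hinit]
    _ = ∫ p, f p.2 p.1 ∂(μ.prod (Measure.pi fun _ : Fin n => μ)) :=
        hsplit.integral_comp (MeasurableEquiv.measurableEmbedding _) fun p => f p.2 p.1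
    _ = ∫ y, ∫ x, f y x ∂μ ∂(Measure.pi fun _ : Fin n => μ) := integral_prod_symm _ hf.swap

section Ensemble

variable {V K : Type*} {F : (V → ℝ) → K → (V → ℝ)}

theorem isProbDist_ENS [Fintype V] (hFdist : ∀ P, IsProbDist P → ∀ k, IsProbDist (F P k)) :
    ∀ (n : ℕ) {P : V → ℝ}, IsProbDist P → ∀ k, IsProbDist (ENS F n P k)
  | 0, _, hP, _ => hP
  | n + 1, _, hP, _ => hFdist _ (isProbDist_ENS hFdist n hP _) _

theorem measurable_ENS [MeasurableSpace K]
    (hFmeas : ∀ v, Measurable fun pk : (V → ℝ) × K => F pk.1 pk.2 v) :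
    ∀ (n : ℕ) (P : V → ℝ) (v : V), Measurable fun k : Fin n → K => ENS F n P k v
  | 0, _, _ => measurable_const
  | n + 1, P, v => (hFmeas v).comp <|
      (measurable_pi_lambda _ fun w => (measurable_ENS hFmeas n P w).comp
        (measurable_pi_lambda _ fun _ => measurable_pi_apply _)).prodMk (measurable_pi_apply _)

theorem integral_ENS_succ [Fintype V] [MeasurableSpace K] (μ : Measure K) [IsFiniteMeasure μ]
    (hFmeas : ∀ v, Measurable fun pk : (V → ℝ) × K => F pk.1 pk.2 v)
    (hFdist : ∀ P, IsProbDist P → ∀ k, IsProbDist (F P k))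
    (hFunbiased : ∀ P, IsProbDist P → ∀ v, ∫ k, F P k v ∂μ = P v)
    (n : ℕ) {P : V → ℝ} (hP : IsProbDist P) (v : V) :
    ∫ k, ENS F (n + 1) P k v ∂(Measure.pi fun _ : Fin (n + 1) => μ) =
      ∫ k, ENS F n P k v ∂(Measure.pi fun _ : Fin n => μ) := by
  have hmeas : Measurable fun p : (Fin n → K) × K => F (ENS F n P p.1) p.2 v :=
    (hFmeas v).comp <| (measurable_pi_lambda _ fun w =>
      (measurable_ENS hFmeas n P w).comp measurable_fst).prodMk measurable_snd
  have hint : Integrable (fun p : (Fin n → K) × K => F (ENS F n P p.1) p.2 v)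
      ((Measure.pi fun _ : Fin n => μ).prod μ) :=
    .of_bound hmeas.aestronglyMeasurable 1 <| .of_forall fun p =>
      (hFdist _ (isProbDist_ENS hFdist n hP p.1) p.2).norm_le_one v
  calc ∫ k, ENS F (n + 1) P k v ∂(Measure.pi fun _ : Fin (n + 1) => μ)
      = ∫ y, ∫ x, F (ENS F n P y) x v ∂μ ∂(Measure.pi fun _ : Fin n => μ) :=
        integral_pi_fin_succ_eq_integral_integral_last μ (f := fun y x => F (ENS F n P y) x v) hint
    _ = ∫ y, ENS F n P y v ∂(Measure.pi fun _ : Fin n => μ) := by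
        congr 1 with y
        exact hFunbiased _ (isProbDist_ENS hFdist n hP y) v

end Ensemble

theorem ensemble_unbiased_general
    {V K : Type*} [Fintype V] [MeasurableSpace K]
    (μ : Measure K) [IsProbabilityMeasure μ]
    (F : (V → ℝ) → K → (V → ℝ))
    (hFmeas : ∀ v : V, Measurable (fun pk : (V → ℝ) × K => F pk.1 pk.2 v))
    (hFdist : ∀ P : V → ℝ, IsProbDist P → ∀ k : K, IsProbDist (F P k))
    (hFunbiased : ∀ P : V → ℝ, IsProbDist P → ∀ v : V, ∫ k, F P k v ∂μ = P v)
    (n : ℕ) (P : V → ℝ) (hP : IsProbDist P) (v : V) :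
    ∫ k, ENS F n P k v ∂(Measure.pi fun _ : Fin n => μ) = P v := by
  induction n with
  | zero => simp [ENS]
  | succ n ih => rw [integral_ENS_succ μ hFmeas hFdist hFunbiased n hP v, ih]

/-- **Unbiasedness of the ensemble.**  If `F` is an unbiased reweighting map with respect to
the key measure `μ`, then for every `n ≥ 1`, every probability distribution `P` on `V` and
every token `v`, the expectation of `ENS F n P k v` over keys `k` drawn i.i.d. from `μ`
(i.e. with respect to the product measure `μ^⊗n` on `Fin n → K`) equals `P v`. -/
theorem ensemble_unbiased
    {V K : Type*} [Fintype V] [Nonempty V] [MeasurableSpace K]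
    (μ : Measure K) [IsProbabilityMeasure μ]
    (F : (V → ℝ) → K → (V → ℝ))
    (hFmeas : ∀ v : V, Measurable (fun pk : (V → ℝ) × K => F pk.1 pk.2 v))
    (hFdist : ∀ P : V → ℝ, IsProbDist P → ∀ k : K, IsProbDist (F P k))
    (hFunbiased : ∀ P : V → ℝ, IsProbDist P → ∀ v : V, ∫ k, F P k v ∂μ = P v)
    (n : ℕ) (hn : 1 ≤ n) (P : V → ℝ) (hP : IsProbDist P) (v : V) :
    ∫ k, ENS F n P k v ∂(Measure.pi fun _ : Fin n => μ) = P v :=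
  ensemble_unbiased_general μ F hFmeas hFdist hFunbiased n P hP v
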